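/- Let μ = (μ₁, …, μ_r) be a partition, let q and z be invertible indeterminates, and let u be an indeterminate. Then in the appropriate field of rational functions, ∏_{b ∈ μ} ((u - z q^{2c(b)})² (u - z^{-1} q^{-2(c(b)+1)}) (u - z^{-1} q^{-2(c(b)-1)})) / ((u - z^{-1} q^{-2c(b)})² (u - z q^{2(c(b)+1)}) (u - z q^{2(c(b)-1)})) equals ((u - z^{-1}q^{2r})(u - z)) / ((u - z^{-1})(u - z q^{-2r})) · ∏_{i=1}^{r} ((u - z^{-1} q^{-2(μᵢ - i + 1)})(u - z q^{2(μᵢ - i)})) / ((u - z^{-1} q^{-2(μᵢ - i)})(u - z q^{2(μᵢ - i + 1)})). -/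

import Mathlib

noncomputable section

/-- The field `ℚ(q, z, u)` of rational functions in three indeterminates. -/
abbrev K1 : Type := FractionRing (MvPolynomial (Fin 3) ℚ)

/-- The indeterminate `q`. -/
noncomputable def qq : K1 := algebraMap (MvPolynomial (Fin 3) ℚ) K1 (MvPolynomial.X 0)

/-- The indeterminate `z`. -/
noncomputable def zz : K1 := algebraMap (MvPolynomial (Fin 3) ℚ) K1 (MvPolynomial.X 1)

/-- The indeterminate `u`. -/
noncomputable def uu : K1 := algebraMap (MvPolynomial (Fin 3) ℚ) K1 (MvPolynomial.X 2)

/-!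
Each box factor is a ratio `A(c) / A(c - 1)` of consecutive row factors, so the product over
row `i` telescopes to `A(μᵢ - i - 1) / A(-i - 1)` (rows indexed from `0`). The denominators
telescope once more, `A(-k - 1) = B(k + 1) / B(k)` with `B(k) = (u - z q^{-2k}) / (u - z⁻¹ q^{2k})`,
and leave the prefactor `B(0) / B(r)`. Both telescopings only need `u ∉ z q^ℤ ∪ z⁻¹ q^ℤ`, which
holds in `ℚ(q, z, u)` because clearing denominators in `u = z^{±1} q^k` gives a polynomial
identity that fails at `u = 0`.
-/

lemma Finset.prod_range_div_of_ne_zero {G : Type*} [CommGroupWithZero G] (f : ℕ → G)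
    (hf : ∀ i, f i ≠ 0) (n : ℕ) : ∏ i ∈ Finset.range n, f (i + 1) / f i = f n / f 0 := by
  induction n with
  | zero => simp [hf 0]
  | succ n ih => rw [Finset.prod_range_succ, ih, mul_comm, div_mul_div_cancel₀ (hf n)]

section Telescoping

open Finset

variable {K : Type*} [Field K] (q z u : K)

def boxFactor (c : ℤ) : K :=
  ((u - z * q ^ (2 * c)) ^ 2 * (u - z⁻¹ * q ^ (-2 * (c + 1))) * (u - z⁻¹ * q ^ (-2 * (c - 1)))) /
    ((u - z⁻¹ * q ^ (-2 * c)) ^ 2 * (u - z * q ^ (2 * (c + 1))) * (u - z * q ^ (2 * (c - 1))))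

def rowFactor (c : ℤ) : K :=
  ((u - z⁻¹ * q ^ (-2 * (c + 1))) * (u - z * q ^ (2 * c))) /
    ((u - z⁻¹ * q ^ (-2 * c)) * (u - z * q ^ (2 * (c + 1))))

def baseFactor (k : ℕ) : K :=
  (u - z * q ^ (-2 * (k : ℤ))) / (u - z⁻¹ * q ^ (2 * (k : ℤ)))

lemma boxFactor_eq_div (c : ℤ) :
    boxFactor q z u c = rowFactor q z u c / rowFactor q z u (c - 1) := by
  unfold boxFactor rowFactor
  rw [sub_add_cancel]
  simp only [div_eq_mul_inv, mul_inv, inv_inv, ← inv_pow]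
  ring

lemma rowFactor_neg_sub_one (k : ℕ) :
    rowFactor q z u (-k - 1) = baseFactor q z u (k + 1) / baseFactor q z u k := by
  unfold rowFactor baseFactor
  rw [show -2 * (-(k : ℤ) - 1 + 1) = 2 * k by ring, show 2 * (-(k : ℤ) - 1 + 1) = -2 * k by ring,
    show 2 * (-(k : ℤ) - 1) = -2 * ((k + 1 : ℕ) : ℤ) by push_cast; ring,
    show -2 * (-(k : ℤ) - 1) = 2 * ((k + 1 : ℕ) : ℤ) by push_cast; ring]
  simp only [div_eq_mul_inv, mul_inv, inv_inv]
  ring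

variable {q z u}

lemma prod_boxFactor_row (h₁ : ∀ k : ℤ, u - z * q ^ k ≠ 0) (h₂ : ∀ k : ℤ, u - z⁻¹ * q ^ k ≠ 0)
    (i m : ℕ) : ∏ j ∈ range m, boxFactor q z u (j - i) =
      rowFactor q z u (m - i - 1) / rowFactor q z u (-i - 1) := by
  have hrow (j : ℕ) : rowFactor q z u (j - i - 1) ≠ 0 :=
    div_ne_zero (mul_ne_zero (h₂ _) (h₁ _)) (mul_ne_zero (h₂ _) (h₁ _))
  convert prod_range_div_of_ne_zero (fun j : ℕ ↦ rowFactor q z u (j - i - 1)) hrow m using 2 with j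
  · rw [boxFactor_eq_div]
    congr 2
    push_cast
    ring
  · simp

lemma prod_rowFactor_neg_sub_one (h₁ : ∀ k : ℤ, u - z * q ^ k ≠ 0)
    (h₂ : ∀ k : ℤ, u - z⁻¹ * q ^ k ≠ 0) (r : ℕ) :
    ∏ i ∈ range r, rowFactor q z u (-i - 1) = baseFactor q z u r / baseFactor q z u 0 := by
  simp_rw [rowFactor_neg_sub_one]
  exact prod_range_div_of_ne_zero (baseFactor q z u) (fun k ↦ div_ne_zero (h₁ _) (h₂ _)) r

theorem prod_boxFactor_youngDiagram (h₁ : ∀ k : ℤ, u - z * q ^ k ≠ 0)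
    (h₂ : ∀ k : ℤ, u - z⁻¹ * q ^ k ≠ 0) (r : ℕ) (μ : Fin r → ℕ) :
    ∏ i : Fin r, ∏ j ∈ range (μ i), boxFactor q z u (j - (i : ℕ)) =
      ((u - z⁻¹ * q ^ (2 * (r : ℤ))) * (u - z)) / ((u - z⁻¹) * (u - z * q ^ (-2 * (r : ℤ)))) *
        ∏ i : Fin r, rowFactor q z u (μ i - (i : ℕ) - 1) := by
  simp_rw [prod_boxFactor_row h₁ h₂]
  rw [prod_div_distrib, Fin.prod_univ_eq_prod_range (fun i ↦ rowFactor q z u (-i - 1)),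
    prod_rowFactor_neg_sub_one h₁ h₂]
  simp only [baseFactor, CharP.cast_eq_zero, mul_zero, zpow_zero, mul_one, div_eq_mul_inv, mul_inv,
    inv_inv]
  ring

end Telescoping

section Indeterminates

open MvPolynomial

lemma algebraMap_X_ne_zero (i : Fin 3) : algebraMap (MvPolynomial (Fin 3) ℚ) K1 (X i) ≠ 0 :=
  (map_ne_zero_iff _ (IsFractionRing.injective _ _)).2 (X_ne_zero i)

lemma qq_ne_zero : qq ≠ 0 := algebraMap_X_ne_zero 0

lemma zz_ne_zero : zz ≠ 0 := algebraMap_X_ne_zero 1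

lemma uu_mul_algebraMap_ne_algebraMap (p p' : MvPolynomial (Fin 3) ℚ)
    (hp' : eval (fun i ↦ if i = 2 then 0 else 1) p' ≠ 0) :
    uu * algebraMap _ K1 p ≠ algebraMap _ K1 p' := by
  rw [uu, ← map_mul, (IsFractionRing.injective _ K1).ne_iff]
  intro h
  apply hp'
  simpa using (congrArg (eval fun i ↦ if i = 2 then 0 else 1) h).symm

lemma uu_sub_zz_mul_qq_zpow_ne_zero (k : ℤ) : uu - zz * qq ^ k ≠ 0 := by
  obtain ⟨a, b, rfl⟩ : ∃ a b : ℕ, k = a - b := ⟨k.toNat, (-k).toNat, by omega⟩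
  rw [sub_ne_zero, zpow_sub₀ qq_ne_zero, zpow_natCast, zpow_natCast, ← mul_div_assoc, Ne,
    eq_div_iff (pow_ne_zero _ qq_ne_zero), qq, zz, ← map_pow, ← map_pow, ← map_mul]
  exact uu_mul_algebraMap_ne_algebraMap _ _ (by simp)

lemma uu_sub_inv_zz_mul_qq_zpow_ne_zero (k : ℤ) : uu - zz⁻¹ * qq ^ k ≠ 0 := by
  obtain ⟨a, b, rfl⟩ : ∃ a b : ℕ, k = a - b := ⟨k.toNat, (-k).toNat, by omega⟩
  rw [sub_ne_zero, zpow_sub₀ qq_ne_zero, zpow_natCast, zpow_natCast,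
    show zz⁻¹ * (qq ^ a / qq ^ b) = qq ^ a / (zz * qq ^ b) by ring, Ne,
    eq_div_iff (mul_ne_zero zz_ne_zero (pow_ne_zero _ qq_ne_zero)), qq, zz, ← map_pow, ← map_pow,
    ← map_mul]
  exact uu_mul_algebraMap_ne_algebraMap _ _ (by simp)

end Indeterminates

theorem stmt1_general (r : ℕ) (μ : Fin r → ℕ) :
    (∏ i : Fin r, ∏ j ∈ Finset.range (μ i),
      ((uu - zz * qq ^ (2 * ((j : ℤ) - ((i : ℕ) : ℤ)))) ^ 2 *
       (uu - zz⁻¹ * qq ^ (-2 * (((j : ℤ) - ((i : ℕ) : ℤ)) + 1))) *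
       (uu - zz⁻¹ * qq ^ (-2 * (((j : ℤ) - ((i : ℕ) : ℤ)) - 1)))) /
      ((uu - zz⁻¹ * qq ^ (-2 * ((j : ℤ) - ((i : ℕ) : ℤ)))) ^ 2 *
       (uu - zz * qq ^ (2 * (((j : ℤ) - ((i : ℕ) : ℤ)) + 1))) *
       (uu - zz * qq ^ (2 * (((j : ℤ) - ((i : ℕ) : ℤ)) - 1)))))
    = ((uu - zz⁻¹ * qq ^ (2 * (r : ℤ))) * (uu - zz)) /
        ((uu - zz⁻¹) * (uu - zz * qq ^ (-2 * (r : ℤ)))) *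
      ∏ i : Fin r,
        ((uu - zz⁻¹ * qq ^ (-2 * (((μ i : ℤ) - ((i : ℕ) : ℤ) - 1) + 1))) *
         (uu - zz * qq ^ (2 * ((μ i : ℤ) - ((i : ℕ) : ℤ) - 1)))) /
        ((uu - zz⁻¹ * qq ^ (-2 * ((μ i : ℤ) - ((i : ℕ) : ℤ) - 1))) *
         (uu - zz * qq ^ (2 * (((μ i : ℤ) - ((i : ℕ) : ℤ) - 1) + 1)))) :=
  prod_boxFactor_youngDiagram uu_sub_zz_mul_qq_zpow_ne_zero uu_sub_inv_zz_mul_qq_zpow_ne_zero r μ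

/-- For a partition `μ` with at most `r` rows (boxes `(i,j)` 0-indexed,
content `c = j - i`), in `ℚ(q,z,u)`:
`∏_{b∈μ} ((u - z q^{2c})² (u - z⁻¹ q^{-2(c+1)}) (u - z⁻¹ q^{-2(c-1)})) /
  ((u - z⁻¹ q^{-2c})² (u - z q^{2(c+1)}) (u - z q^{2(c-1)}))
= ((u - z⁻¹ q^{2r})(u - z))/((u - z⁻¹)(u - z q^{-2r})) ·
  ∏_{i=1}^r ((u - z⁻¹ q^{-2(μᵢ-i+1)})(u - z q^{2(μᵢ-i)}))/((u - z⁻¹ q^{-2(μᵢ-i)})(u - z q^{2(μᵢ-i+1)}))`,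
where in the 0-indexed product `μᵢ - i` (1-indexed) is `(μ i : ℤ) - i - 1`. -/
theorem stmt1 (r : ℕ) (μ : Fin r → ℕ)
    (hμ : ∀ i j : Fin r, i ≤ j → μ j ≤ μ i) :
    (∏ i : Fin r, ∏ j ∈ Finset.range (μ i),
      ((uu - zz * qq ^ (2 * ((j : ℤ) - ((i : ℕ) : ℤ)))) ^ 2 *
       (uu - zz⁻¹ * qq ^ (-2 * (((j : ℤ) - ((i : ℕ) : ℤ)) + 1))) *
       (uu - zz⁻¹ * qq ^ (-2 * (((j : ℤ) - ((i : ℕ) : ℤ)) - 1)))) /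
      ((uu - zz⁻¹ * qq ^ (-2 * ((j : ℤ) - ((i : ℕ) : ℤ)))) ^ 2 *
       (uu - zz * qq ^ (2 * (((j : ℤ) - ((i : ℕ) : ℤ)) + 1))) *
       (uu - zz * qq ^ (2 * (((j : ℤ) - ((i : ℕ) : ℤ)) - 1)))))
    = ((uu - zz⁻¹ * qq ^ (2 * (r : ℤ))) * (uu - zz)) /
        ((uu - zz⁻¹) * (uu - zz * qq ^ (-2 * (r : ℤ)))) *
      ∏ i : Fin r,
        ((uu - zz⁻¹ * qq ^ (-2 * (((μ i : ℤ) - ((i : ℕ) : ℤ) - 1) + 1))) *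
         (uu - zz * qq ^ (2 * ((μ i : ℤ) - ((i : ℕ) : ℤ) - 1)))) /
        ((uu - zz⁻¹ * qq ^ (-2 * ((μ i : ℤ) - ((i : ℕ) : ℤ) - 1))) *
         (uu - zz * qq ^ (2 * (((μ i : ℤ) - ((i : ℕ) : ℤ) - 1) + 1)))) :=
  stmt1_general r μ
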